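/- arXiv:1508.00471 — 5 statements merged into one kernel-verified Lean document; each statement's English description precedes it below -/
import Mathlib

section
/- Let (cᵢ)_{i∈ℕ} be a sequence of colorings cᵢ : [ℕ]^n → Fin k converging pointwise to c∞ (for every n-element set A, cᵢ(A) = c∞(A) for all sufficiently large i). Define c : [ℕ]^{n+1} → Fin k by c(A ∪ {i}) := cᵢ(A) for i > max A. Then c is stable, and every infinite set M homogeneous for c is homogeneous for c∞ with the same color. -/
def IsHomogC (n : ℕ) {α : Type} (c : Finset ℕ → α) (M : Set ℕ) (x : α) : Prop :=
  ∀ A : Finset ℕ, A.card = n → (↑A : Set ℕ) ⊆ M → c A = x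

def IsStable (n : ℕ) {α : Type} (c : Finset ℕ → α) : Prop :=
  ∀ A : Finset ℕ, A.card = n → ∃ x N, ∀ i, N ≤ i → (∀ a ∈ A, a < i) → c (insert i A) = x

theorem stmt6 (n k : ℕ) (hn : 1 ≤ n) (hk : 1 ≤ k)
    (cs : ℕ → Finset ℕ → Fin k) (cinf : Finset ℕ → Fin k)
    (hconv : ∀ A : Finset ℕ, A.card = n → ∃ N, ∀ i, N ≤ i → cs i A = cinf A)
    (c : Finset ℕ → Fin k)
    (hc : ∀ (A : Finset ℕ) (i : ℕ), A.card = n → (∀ a ∈ A, a < i) →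
      c (insert i A) = cs i A) :
    IsStable n c ∧
    ∀ (M : Set ℕ), M.Infinite → ∀ x : Fin k,
      IsHomogC (n + 1) c M x → IsHomogC n cinf M x := by
  constructor
  · intro A hA
    obtain ⟨N, hN⟩ := hconv A hA
    exact ⟨cinf A, N, fun i hi hlt => by rw [hc A i hA hlt, hN i hi]⟩
  · intro M hM x hhom A hA hAM
    obtain ⟨N, hN⟩ := hconv A hA
    obtain ⟨i, hiM, hi⟩ := hM.exists_gt (max N (if h : A.Nonempty then A.max' h else 0))
    have hlt : ∀ a ∈ A, a < i := by
      intro a ha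
      have : A.Nonempty := ⟨a, ha⟩
      calc a ≤ A.max' this := A.le_max' a ha
        _ ≤ _ := le_max_right _ _
        _ < i := by simpa [this] using hi
    have hiA : i ∉ A := fun h => lt_irrefl i (hlt i h)
    have h1 : c (insert i A) = x := by
      apply hhom
      · rw [Finset.card_insert_of_notMem hiA, hA]
      · intro a ha
        rcases Finset.mem_insert.mp (by simpa using ha) with h | h
        · exact h ▸ hiM
        · exact hAM h
    rw [hc A i hA hlt, hN i (le_trans (le_max_left _ _) hi.le)] at h1
    exact h1
end

section
/- Let c : [ℕ]^{n+1} → Fin k be a stable coloring and let c∞ : [ℕ]^n → Fin k be its limit coloring, i.e., c∞(A) = the eventual value of c(A ∪ {j}) as j → ∞. If M∞ is an infinite set homogeneous for c∞ with color x, then there exists an infinite set M homogeneous for c with color x. -/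
theorem stmt7 (n k : ℕ) (hn : 1 ≤ n) (hk : 1 ≤ k)
    (c : Finset ℕ → Fin k) (hstable : IsStable n c)
    (cinf : Finset ℕ → Fin k)
    (hlim : ∀ A : Finset ℕ, A.card = n →
      ∃ N, ∀ j, N ≤ j → (∀ a ∈ A, a < j) → c (insert j A) = cinf A)
    (Minf : Set ℕ) (hMinf : Minf.Infinite) (x : Fin k)
    (hhom : IsHomogC n cinf Minf x) :
    ∃ M : Set ℕ, M.Infinite ∧ IsHomogC (n + 1) c M x := by
  classical
  -- greedy step
  have step : ∀ s : Finset ℕ, ↑s ⊆ Minf → ∃ m, m ∈ Minf ∧ (∀ a ∈ s, a < m) ∧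
      ∀ A ⊆ s, A.card = n → c (insert m A) = x := by
    intro s hs
    set NA : Finset ℕ → ℕ := fun A =>
      if h : A.card = n then Classical.choose (hlim A h) else 0 with hNA
    set N : ℕ := max (s.powerset.sup NA) (s.sup id + 1) with hN
    obtain ⟨m, hmM, hmN⟩ := hMinf.exists_gt N
    have hsm : ∀ a ∈ s, a < m := by
      intro a ha
      have : a ≤ s.sup id := Finset.le_sup (f := id) ha
      omega
    refine ⟨m, hmM, hsm, ?_⟩
    intro A hAs hAcard
    have hAx : cinf A = x :=
      hhom A hAcard (fun a ha => hs (hAs ha))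
    have spec := Classical.choose_spec (hlim A hAcard)
    have hNAle : NA A ≤ N := by
      have := Finset.le_sup (f := NA) (Finset.mem_powerset.mpr hAs)
      omega
    have hNAeq : NA A = Classical.choose (hlim A hAcard) := by
      simp [hNA, hAcard]
    rw [← hAx]
    exact spec m (by omega) (fun a ha => hsm a (hAs ha))
  -- build the sequence
  let F : ℕ → {s : Finset ℕ // ↑s ⊆ Minf} := fun i =>
    Nat.rec ⟨∅, by simp⟩
      (fun _ p => ⟨insert (Classical.choose (step p.1 p.2)) p.1, by
        rw [Finset.coe_insert]
        exact Set.insert_subset (Classical.choose_spec (step p.1 p.2)).1 p.2⟩) i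
  let g : ℕ → ℕ := fun i => Classical.choose (step (F i).1 (F i).2)
  have hFsucc : ∀ i, (F (i+1)).1 = insert (g i) (F i).1 := fun i => rfl
  have hgspec : ∀ i, g i ∈ Minf ∧ (∀ a ∈ (F i).1, a < g i) ∧
      ∀ A ⊆ (F i).1, A.card = n → c (insert (g i) A) = x :=
    fun i => Classical.choose_spec (step (F i).1 (F i).2)
  have hFmono : ∀ i j, i ≤ j → (F i).1 ⊆ (F j).1 := by
    intro i j hij
    induction j with
    | zero => simp_all
    | succ j ih =>
      rcases Nat.lt_or_ge i (j+1) with h | h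
      · have := ih (by omega)
        rw [hFsucc j]
        exact this.trans (Finset.subset_insert _ _)
      · have : i = j + 1 := by omega
        subst this; exact subset_rfl
  have hgmem : ∀ i j, i < j → g i ∈ (F j).1 := by
    intro i j hij
    have : g i ∈ (F (i+1)).1 := by rw [hFsucc]; exact Finset.mem_insert_self _ _
    exact hFmono (i+1) j hij this
  have hgmono : StrictMono g := by
    intro i j hij
    exact (hgspec j).2.1 (g i) (hgmem i j hij)
  refine ⟨Set.range g, Set.infinite_range_of_injective hgmono.injective, ?_⟩
  intro B hBcard hBsub
  have hBne : B.Nonempty := by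
    apply Finset.card_pos.mp; omega
  obtain ⟨i, hi⟩ := hBsub (Finset.mem_coe.mpr (B.max'_mem hBne))
  -- the erase of the max is inside F i
  have hsubFi : B.erase (B.max' hBne) ⊆ (F i).1 := by
    intro b hb
    have hbB := Finset.mem_of_mem_erase hb
    obtain ⟨j, hj⟩ := hBsub (Finset.mem_coe.mpr hbB)
    have hblt : b < B.max' hBne :=
      lt_of_le_of_ne (Finset.le_max' B b hbB) (Finset.ne_of_mem_erase hb)
    have hji : j < i := by
      by_contra h
      have : g i ≤ g j := hgmono.le_iff_le.mpr (by omega)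
      omega
    rw [← hj]
    exact hgmem j i hji
  have hcard : (B.erase (B.max' hBne)).card = n := by
    rw [Finset.card_erase_of_mem (B.max'_mem hBne)]; omega
  have := (hgspec i).2.2 _ hsubFi hcard
  rw [hi] at this
  rwa [Finset.insert_erase (B.max'_mem hBne)] at this
end

section
/- Let (Sᵢ)_{i∈ℕ} be a sequence of subsets of ℕ with S_{2i+1} = {i} for all i. For i < j let d(i,j) = min {m : (i ∈ S_m) ≠ (j ∈ S_m)} (well-defined since S_{2i+1} separates i and j). Define c : [ℕ]^2 → Fin 2 by c{i<j} = 0 if i ∈ S_{d(i,j)} and c{i<j} = 1 otherwise. Then every infinite set M homogeneous for c is cohesive for (Sᵢ): for every m, either M ∩ S_m or M \ S_m is finite. -/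
theorem stmt8 (S : ℕ → Set ℕ) (hS : ∀ i, S (2 * i + 1) = {i})
    (d : ℕ → ℕ → ℕ)
    (hd : ∀ i j, i < j →
      (¬ (i ∈ S (d i j) ↔ j ∈ S (d i j))) ∧ ∀ m < d i j, (i ∈ S m ↔ j ∈ S m))
    (c : Finset ℕ → Fin 2)
    (hc : ∀ i j, i < j →
      (i ∈ S (d i j) → c {i, j} = 0) ∧ (i ∉ S (d i j) → c {i, j} = 1)) :
    ∀ (M : Set ℕ), M.Infinite → (∃ x, IsHomogC 2 c M x) →
      ∀ m, (M ∩ S m).Finite ∨ (M \ S m).Finite := by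
  classical
  rintro M hM ⟨x, hx⟩ m
  induction m using Nat.strong_induction_on with
  | _ m IH =>
  by_contra h
  push_neg at h
  obtain ⟨h1, h2⟩ := h
  have h1 : (M ∩ S m).Infinite := h1
  have h2 : (M \ S m).Infinite := h2
  -- the finite exceptional set below level m
  set T : Set ℕ :=
    ⋃ k ∈ Finset.range m, (if (M ∩ S k).Finite then M ∩ S k else M \ S k) with hTdef
  have hT : T.Finite := by
    apply Set.Finite.biUnion (Finset.finite_toSet _)
    intro k hk
    simp only [Finset.mem_coe, Finset.mem_range] at hk
    split_ifs with hfin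
    · exact hfin
    · exact (IH k hk).resolve_left hfin
  have memT : ∀ k < m, ∀ i : ℕ,
      i ∈ (if (M ∩ S k).Finite then M ∩ S k else M \ S k) → i ∈ T := by
    intro k hk i hi
    rw [hTdef]
    simp only [Set.mem_iUnion]
    exact ⟨k, Finset.mem_range.mpr hk, hi⟩
  have key : ∀ i ∈ M, i ∉ T → ∀ j ∈ M, j ∉ T → ∀ k < m, (i ∈ S k ↔ j ∈ S k) := by
    intro i hiM hiT j hjM hjT k hk
    by_cases hfin : (M ∩ S k).Finite
    · have hi : i ∉ S k := fun hi =>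
        hiT (memT k hk i (by rw [if_pos hfin]; exact ⟨hiM, hi⟩))
      have hj : j ∉ S k := fun hj =>
        hjT (memT k hk j (by rw [if_pos hfin]; exact ⟨hjM, hj⟩))
      simp [hi, hj]
    · have hi : i ∈ S k := by
        by_contra hi
        exact hiT (memT k hk i (by rw [if_neg hfin]; exact ⟨hiM, hi⟩))
      have hj : j ∈ S k := by
        by_contra hj
        exact hjT (memT k hk j (by rw [if_neg hfin]; exact ⟨hjM, hj⟩))
      simp [hi, hj]
  -- generic: if i < j, i,j ∈ M \ T, and S m separates them, then d i j = m
  have dval : ∀ i j, i < j → i ∈ M → i ∉ T → j ∈ M → j ∉ T →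
      ¬ (i ∈ S m ↔ j ∈ S m) → d i j = m := by
    intro i j hij hiM hiT hjM hjT hsep
    obtain ⟨hne, hbelow⟩ := hd i j hij
    rcases lt_trichotomy (d i j) m with hlt | heq | hgt
    · exact absurd (key i hiM hiT j hjM hjT _ hlt) hne
    · exact heq
    · exact absurd (hbelow m hgt) hsep
  have card2 : ∀ i j : ℕ, i < j → ({i, j} : Finset ℕ).card = 2 := by
    intro i j hij; exact Finset.card_pair (ne_of_lt hij)
  have sub2 : ∀ i j : ℕ, i ∈ M → j ∈ M → (↑({i, j} : Finset ℕ) : Set ℕ) ⊆ M := by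
    intro i j hi hj
    intro a ha
    simp only [Finset.coe_insert, Finset.coe_singleton, Set.mem_insert_iff,
      Set.mem_singleton_iff] at ha
    rcases ha with rfl | rfl <;> assumption
  -- x = 0
  obtain ⟨i, hi⟩ := (h1.diff hT).nonempty
  obtain ⟨j, hj, hij⟩ := (h2.diff hT).exists_gt i
  have hiM : i ∈ M := hi.1.1
  have hjM : j ∈ M := hj.1.1
  have hiS : i ∈ S m := hi.1.2
  have hjS : j ∉ S m := hj.1.2
  have hdij : d i j = m := dval i j hij hiM hi.2 hjM hj.2 (by tauto)
  have hx0 : x = 0 := by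
    rw [← hx {i, j} (card2 i j hij) (sub2 i j hiM hjM)]
    exact ((hc i j hij).1 (by rw [hdij]; exact hiS)).symm ▸ rfl
  -- x = 1
  obtain ⟨i', hi'⟩ := (h2.diff hT).nonempty
  obtain ⟨j', hj', hij'⟩ := (h1.diff hT).exists_gt i'
  have hiM' : i' ∈ M := hi'.1.1
  have hjM' : j' ∈ M := hj'.1.1
  have hiS' : i' ∉ S m := hi'.1.2
  have hjS' : j' ∈ S m := hj'.1.2
  have hdij' : d i' j' = m := dval i' j' hij' hiM' hi'.2 hjM' hj'.2 (by tauto)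
  have hx1 : x = 1 := by
    rw [← hx {i', j'} (card2 i' j' hij') (sub2 i' j' hiM' hjM')]
    exact ((hc i' j' hij').2 (by rw [hdij']; exact hiS')).symm ▸ rfl
  rw [hx0] at hx1
  exact absurd hx1 (by decide)
end

section
/- Let p : ℕ → ℕ → Fin 2 be such that for every i the limit q(i) := lim_{j→∞} p j i exists (i.e., j ↦ p j i is eventually constant), and suppose q itself converges to x ∈ Fin 2 (q(i) = x for all sufficiently large i). Define c : [ℕ]^2 → Fin 2 by c{i<j} := p j i. Then c is a stable coloring and every infinite set M homogeneous for c has color x. -/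
theorem stmt10 (p : ℕ → ℕ → Fin 2) (q : ℕ → Fin 2) (x : Fin 2)
    (hq : ∀ i, ∃ N, ∀ j, N ≤ j → p j i = q i)
    (hx : ∃ N, ∀ i, N ≤ i → q i = x)
    (c : Finset ℕ → Fin 2)
    (hc : ∀ i j, i < j → c {i, j} = p j i) :
    IsStable 1 c ∧
    ∀ (M : Set ℕ), M.Infinite → ∀ y : Fin 2, IsHomogC 2 c M y → y = x := by
  constructor
  · intro A hA
    obtain ⟨a, rfl⟩ := Finset.card_eq_one.mp hA
    obtain ⟨N, hN⟩ := hq a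
    refine ⟨q a, N, fun i hi hlt => ?_⟩
    have ha : a < i := hlt a (Finset.mem_singleton_self a)
    have : ({a, i} : Finset ℕ) = insert i {a} := by
      ext b; simp [or_comm]
    rw [← this, hc a i ha, hN i hi]
  · intro M hM y hy
    obtain ⟨N, hN⟩ := hx
    obtain ⟨i, hiM, hiN⟩ := hM.exists_gt N
    obtain ⟨Ni, hNi⟩ := hq i
    obtain ⟨j, hjM, hji⟩ := hM.exists_gt (max i Ni)
    have hij : i < j := lt_of_le_of_lt (le_max_left _ _) hji
    have hcard : ({i, j} : Finset ℕ).card = 2 := by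
      rw [Finset.card_insert_of_notMem (by simp [hij.ne]), Finset.card_singleton]
    have hsub : (↑({i, j} : Finset ℕ) : Set ℕ) ⊆ M := by
      intro b hb; simp at hb; rcases hb with rfl | rfl <;> assumption
    have := hy {i, j} hcard hsub
    rw [hc i j hij, hNi j (le_of_lt (lt_of_le_of_lt (le_max_right _ _) hji)),
      hN i hiN.le] at this
    exact this.symm
end

section
/- Let (cᵢ)_{i∈ℕ} be a sequence of colorings cᵢ : [ℕ]^n → Fin k. For each m let d_m : [ℕ]^n → (Fin m → Fin k) be d_m(A) = (fun i => cᵢ(A)) for i < m, and let d_m⁺ : [ℕ]^{n+1} → Fin 2 be d_m⁺(A) = 0 if A is homogeneous for d_m and 1 otherwise. Define c : [ℕ]^{n+2} → Fin 2 by c({m} ∪ A) := d_m⁺(A) for (n+1)-element sets A with m < min A. Then for every infinite set M homogeneous for c, every i ∈ ℕ, and every m ∈ M with m > i, the set {x ∈ M : x > m} is an infinite homogeneous set for cᵢ. -/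
def IsHomog (n : ℕ) {α : Type} (c : Finset ℕ → α) (M : Set ℕ) : Prop :=
  ∃ x, ∀ A : Finset ℕ, A.card = n → (↑A : Set ℕ) ⊆ M → c A = x

/-- Infinite Ramsey theorem: every coloring of `n`-element subsets of ℕ with finitely many
colors has an infinite homogeneous subset inside any infinite set. -/
theorem myRamsey {γ : Type} [Finite γ] (n : ℕ) (f : Finset ℕ → γ) :
    ∀ S : Set ℕ, S.Infinite →
      ∃ H : Set ℕ, H ⊆ S ∧ H.Infinite ∧ ∃ x, ∀ A : Finset ℕ, A.card = n → ↑A ⊆ H → f A = x := by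
  induction n generalizing f with
  | zero =>
    intro S hS
    refine ⟨S, le_refl _, hS, f ∅, ?_⟩
    intro A hA _
    rw [Finset.card_eq_zero] at hA
    rw [hA]
  | succ n ih =>
    intro S hS
    have key : ∀ T : Set ℕ, T.Infinite → ∃ a : ℕ, ∃ H : Set ℕ, ∃ x : γ,
        a ∈ T ∧ H ⊆ T ∧ (∀ b ∈ H, a < b) ∧ H.Infinite ∧
        ∀ B : Finset ℕ, B.card = n → ↑B ⊆ H → f (insert a B) = x := by
      intro T hT
      obtain ⟨a, haT⟩ := hT.nonempty
      have hT' : (T \ Set.Iic a).Infinite := hT.diff (Set.finite_Iic a)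
      obtain ⟨H, hH1, hH2, x, hx⟩ := ih (fun B => f (insert a B)) (T \ Set.Iic a) hT'
      refine ⟨a, H, x, haT, fun b hb => (hH1 hb).1, fun b hb => ?_, hH2, hx⟩
      have := (hH1 hb).2
      simpa using this
    choose aF HF xF h1 h2 h3 h4 h5 using key
    let seq : ℕ → {T : Set ℕ // T.Infinite} := fun j =>
      Nat.rec ⟨S, hS⟩ (fun _ p => ⟨HF p.1 p.2, h4 p.1 p.2⟩) j
    have hseq : ∀ j, (seq (j + 1)).1 = HF (seq j).1 (seq j).2 := fun j => rfl
    set as : ℕ → ℕ := fun j => aF (seq j).1 (seq j).2 with has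
    set xs : ℕ → γ := fun j => xF (seq j).1 (seq j).2 with hxs
    have hmem : ∀ j, as j ∈ (seq j).1 := fun j => h1 _ _
    have hstep : ∀ j, (seq (j + 1)).1 ⊆ (seq j).1 := fun j => h2 _ _
    have hgt : ∀ j, ∀ b ∈ (seq (j + 1)).1, as j < b := fun j => h3 _ _
    have hmono : ∀ j l, j ≤ l → (seq l).1 ⊆ (seq j).1 := by
      intro j l hjl
      induction l, hjl using Nat.le_induction with
      | base => exact le_refl _
      | succ l hjl ihl => exact (hstep l).trans ihl
    have hasmono : StrictMono as := by
      apply strictMono_nat_of_lt_succ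
      intro j
      exact hgt j _ (hmem (j + 1))
    have hasS : ∀ j, as j ∈ S := fun j => hmono 0 j (Nat.zero_le j) (hmem j)
    obtain ⟨cch, hcch⟩ := Finite.exists_infinite_fiber xs
    have hJ : {j | xs j = cch}.Infinite := by
      have he : xs ⁻¹' {cch} = {j | xs j = cch} := by
        ext j
        simp [Set.mem_preimage]
      rw [← he, ← Set.infinite_coe_iff]
      exact hcch
    refine ⟨as '' {j | xs j = cch}, ?_, hJ.image (hasmono.injective.injOn), cch, ?_⟩
    · rintro _ ⟨j, _, rfl⟩
      exact hasS j
    · intro A hA hAH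
      have hAne : A.Nonempty := Finset.card_pos.mp (by omega)
      obtain ⟨j, hjJ, hjm⟩ := hAH (Finset.mem_coe.mpr (A.min'_mem hAne))
      set m := A.min' hAne with hm
      have hmA : m ∈ A := A.min'_mem hAne
      set B := A.erase m with hB
      have hBcard : B.card = n := by
        rw [hB, Finset.card_erase_of_mem hmA, hA]
        omega
      have hBsub : ↑B ⊆ (seq (j + 1)).1 := by
        intro b hb
        have hbA : b ∈ A := Finset.mem_of_mem_erase hb
        have hbne : b ≠ m := Finset.ne_of_mem_erase hb
        obtain ⟨l, _, hl⟩ := hAH (Finset.mem_coe.mpr hbA)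
        have hbgt : as j < b := by
          have h6 := A.min'_le b hbA
          rw [← hm] at h6
          omega
        have hlj : j < l := by
          rw [← hl] at hbgt
          exact hasmono.lt_iff_lt.mp hbgt
        rw [← hl]
        exact hmono (j + 1) l hlj (hmem l)
      have key2 : f (insert (as j) B) = xs j := h5 (seq j).1 (seq j).2 B hBcard hBsub
      have h6 : insert (as j) B = A := by
        rw [hjm, hB]
        exact Finset.insert_erase hmA
      rw [h6] at key2
      rw [key2]
      exact hjJ

/-- If every `(n+1)`-element subset of `S` is homogeneous for a coloring of `n`-element sets,
then any two `n`-element subsets of `S` get the same color. -/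
theorem homog_pairs {α : Type} (n : ℕ) (hn : 1 ≤ n) (c : Finset ℕ → α) (S : Set ℕ)
    (h : ∀ T : Finset ℕ, T.card = n + 1 → ↑T ⊆ S →
      ∃ x, ∀ B : Finset ℕ, B.card = n → B ⊆ T → c B = x) :
    ∀ (N : ℕ) (A B : Finset ℕ), (A \ B).card = N → A.card = n → B.card = n →
      ↑A ⊆ S → ↑B ⊆ S → c A = c B := by
  intro N
  induction N with
  | zero =>
    intro A B hN hA hB _ _
    have : A ⊆ B := by
      rwa [Finset.card_eq_zero, Finset.sdiff_eq_empty_iff_subset] at hN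
    rw [Finset.eq_of_subset_of_card_le this (by omega)]
  | succ N ihN =>
    intro A B hN hA hB hAS hBS
    have hABne : (A \ B).Nonempty := Finset.card_pos.mp (by omega)
    obtain ⟨a, ha⟩ := hABne
    have haA : a ∈ A := (Finset.mem_sdiff.mp ha).1
    have haB : a ∉ B := (Finset.mem_sdiff.mp ha).2
    have hBAcard : (B \ A).card = N + 1 := by
      rw [← Finset.card_sdiff_comm (hA.trans hB.symm), hN]
    have hBAne : (B \ A).Nonempty := Finset.card_pos.mp (by omega)
    obtain ⟨b, hb⟩ := hBAne
    have hbB : b ∈ B := (Finset.mem_sdiff.mp hb).1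
    have hbA : b ∉ A := (Finset.mem_sdiff.mp hb).2
    set A' : Finset ℕ := insert b (A.erase a) with hA'
    have hbea : b ∉ A.erase a := fun hmem => hbA (Finset.mem_of_mem_erase hmem)
    have hA'card : A'.card = n := by
      rw [hA', Finset.card_insert_of_notMem hbea, Finset.card_erase_of_mem haA, hA]
      omega
    have hTcard : (insert b A).card = n + 1 := by
      rw [Finset.card_insert_of_notMem hbA, hA]
    have hTS : ↑(insert b A) ⊆ S := by
      rw [Finset.coe_insert]
      exact Set.insert_subset (hBS hbB) hAS
    obtain ⟨x, hx⟩ := h (insert b A) hTcard hTS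
    have hcA : c A = x := hx A hA (Finset.subset_insert b A)
    have hA'T : A' ⊆ insert b A := by
      rw [hA']
      exact Finset.insert_subset_insert b (A.erase_subset a)
    have hcA' : c A' = x := hx A' hA'card hA'T
    have hA'S : ↑A' ⊆ S := by
      intro y hy
      rw [hA', Finset.coe_insert] at hy
      rcases hy with rfl | hy
      · exact hBS hbB
      · exact hAS (Finset.mem_coe.mpr (Finset.mem_of_mem_erase (Finset.mem_coe.mp hy)))
    have hsdiff : A' \ B = (A \ B).erase a := by
      ext y
      simp only [hA', Finset.mem_sdiff, Finset.mem_insert, Finset.mem_erase]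
      constructor
      · rintro ⟨rfl | ⟨hy1, hy2⟩, hy3⟩
        · exact absurd hbB hy3
        · exact ⟨hy1, hy2, hy3⟩
      · rintro ⟨hy1, hy2, hy3⟩
        exact ⟨Or.inr ⟨hy1, hy2⟩, hy3⟩
    have hsdcard : (A' \ B).card = N := by
      rw [hsdiff, Finset.card_erase_of_mem ha, hN]
      omega
    have hcA'B : c A' = c B := ihN A' B hsdcard hA'card hB hA'S hBS
    rw [hcA, ← hcA']
    exact hcA'B

theorem stmt15 (n k : ℕ) (hn : 1 ≤ n) (hk : 1 ≤ k)
    (cs : ℕ → Finset ℕ → Fin k)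
    (c : Finset ℕ → Fin 2)
    (hc : ∀ (m : ℕ) (A : Finset ℕ), A.card = n + 1 → (∀ a ∈ A, m < a) →
      (c (insert m A) = 0 ↔ IsHomog n (fun B => fun i : Fin m => cs i B) ↑A)) :
    ∀ (M : Set ℕ), M.Infinite → IsHomog (n + 2) c M →
      ∀ i : ℕ, ∀ m ∈ M, i < m →
        ({x ∈ M | m < x} : Set ℕ).Infinite ∧ IsHomog n (cs i) {x ∈ M | m < x} := by
  intro M hM hHom i m hmM him
  obtain ⟨x0, hx0⟩ := hHom
  set S : Set ℕ := {x ∈ M | m < x} with hSdef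
  have hSsub : S ⊆ M := fun x hx => hx.1
  have hSgt : ∀ x ∈ S, m < x := fun x hx => hx.2
  have hS : S.Infinite := by
    have : S = M \ Set.Iic m := by
      ext x
      simp [hSdef, Set.mem_Iic, not_le]
    rw [this]
    exact hM.diff (Set.finite_Iic m)
  -- Step 1: the homogeneous color x0 of c is 0.
  have hx0eq : x0 = 0 := by
    obtain ⟨H, hHS, hHinf, y, hy⟩ :=
      myRamsey (γ := Fin m → Fin k) n (fun B => fun j : Fin m => cs j B) S hS
    obtain ⟨A, hAH, hAcard⟩ := hHinf.exists_subset_card_eq (n + 1)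
    have hAS : ↑A ⊆ S := hAH.trans hHS
    have hAgt : ∀ a ∈ A, m < a := fun a ha => hSgt a (hAS (Finset.mem_coe.mpr ha))
    have hmA : m ∉ A := fun hmem => lt_irrefl m (hAgt m hmem)
    have hcard2 : (insert m A).card = n + 2 := by
      rw [Finset.card_insert_of_notMem hmA, hAcard]
    have hsubM : ↑(insert m A) ⊆ M := by
      rw [Finset.coe_insert]
      exact Set.insert_subset hmM (hAS.trans hSsub)
    have h1 : c (insert m A) = x0 := hx0 _ hcard2 hsubM
    have h2 : c (insert m A) = 0 := by
      rw [hc m A hAcard hAgt]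
      exact ⟨y, fun B hB hBA => hy B hB (hBA.trans hAH)⟩
    rw [← h1, h2]
  -- Step 2: every (n+1)-subset of S is homogeneous for cs i.
  have hpairs : ∀ T : Finset ℕ, T.card = n + 1 → ↑T ⊆ S →
      ∃ x, ∀ B : Finset ℕ, B.card = n → B ⊆ T → cs i B = x := by
    intro T hTcard hTS
    have hTgt : ∀ a ∈ T, m < a := fun a ha => hSgt a (hTS (Finset.mem_coe.mpr ha))
    have hmT : m ∉ T := fun hmem => lt_irrefl m (hTgt m hmem)
    have hcard2 : (insert m T).card = n + 2 := by
      rw [Finset.card_insert_of_notMem hmT, hTcard]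
    have hsubM : ↑(insert m T) ⊆ M := by
      rw [Finset.coe_insert]
      exact Set.insert_subset hmM (hTS.trans hSsub)
    have h0 : c (insert m T) = 0 := by
      rw [hx0 _ hcard2 hsubM, hx0eq]
    obtain ⟨z, hz⟩ := (hc m T hTcard hTgt).mp h0
    refine ⟨z ⟨i, him⟩, fun B hB hBT => ?_⟩
    have := hz B hB (Finset.coe_subset.mpr hBT)
    exact congrFun this ⟨i, him⟩
  refine ⟨hS, ?_⟩
  obtain ⟨A0, hA0S, hA0card⟩ := hS.exists_subset_card_eq n
  refine ⟨cs i A0, fun A hA hAS => ?_⟩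
  exact homog_pairs n hn (cs i) S hpairs (A \ A0).card A A0 rfl hA hA0card hAS hA0S
end
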